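/- arXiv:2005.09395 — 10 statements merged into one kernel-verified Lean document; each statement's English description precedes it below -/
import Mathlib

section
/- In a reduced commutative ring R, the relation r ≤ s defined by r² = rs is a partial order on R. -/
/-- In a reduced commutative ring, the relation `r ≤ s ↔ r² = r*s` (the rr-order)
is reflexive, antisymmetric and transitive, i.e. a partial order. -/
theorem rr_order_is_partial_order (R : Type*) [CommRing R] [IsReduced R] :
    (∀ r : R, r * r = r * r) ∧
    (∀ r s : R, r * r = r * s → s * s = s * r → r = s) ∧
    (∀ r s t : R, r * r = r * s → s * s = s * t → r * r = r * t) := by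
  refine ⟨fun r => rfl, ?_, ?_⟩
  · intro r s h1 h2
    have h : (r - s) * (r - s) = 0 := by linear_combination h1 + h2
    have := IsReduced.eq_zero (r - s) ⟨2, by rw [pow_two]; exact h⟩
    exact sub_eq_zero.mp this
  · intro r s t h1 h2
    have h : (r * (s - t)) * (r * (s - t)) = 0 := by
      linear_combination (s-t)*(s-t)*h1 + r*(s-t)*h2 - r*(s-t)*h2 + (r*s - r*t)*h2
    have hz := IsReduced.eq_zero (r * (s - t)) ⟨2, by rw [pow_two]; exact h⟩
    linear_combination h1 + hz
end

section
/- If Y is a retract of a topological space X and C(X) is rr-good, then C(Y) is rr-good. -/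
def IsRRGood (R : Type*) [Mul R] : Prop :=
  ∀ r s : R, ∃ h : R, h * h = h * r ∧ h * h = h * s ∧
    ∀ k : R, k * k = k * r → k * k = k * s → k * k = k * h

/-- If `Y` is a retract of `X` and `C(X)` is rr-good, then `C(Y)` is rr-good. -/
theorem isRRGood_of_retract {X Y : Type*} [TopologicalSpace X] [TopologicalSpace Y]
    (φ : C(X, Y)) (ψ : C(Y, X)) (hretr : ∀ y : Y, φ (ψ y) = y)
    (hX : IsRRGood C(X, ℝ)) : IsRRGood C(Y, ℝ) := by
  intro r s
  obtain ⟨h, h1, h2, h3⟩ := hX (r.comp φ) (s.comp φ)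
  refine ⟨h.comp ψ, ?_, ?_, ?_⟩
  · ext y
    have := ContinuousMap.congr_fun h1 (ψ y)
    simpa [hretr y] using this
  · ext y
    have := ContinuousMap.congr_fun h2 (ψ y)
    simpa [hretr y] using this
  · intro k hk1 hk2
    have hk1' : (k.comp φ) * (k.comp φ) = (k.comp φ) * (r.comp φ) := by
      ext x; exact ContinuousMap.congr_fun hk1 (φ x)
    have hk2' : (k.comp φ) * (k.comp φ) = (k.comp φ) * (s.comp φ) := by
      ext x; exact ContinuousMap.congr_fun hk2 (φ x)
    have := h3 (k.comp φ) hk1' hk2'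
    ext y
    have h4 := ContinuousMap.congr_fun this (ψ y)
    simpa [hretr y] using h4
end

section
/- Let X be a topological space with a π-base of clopen sets. If C(X) is rr-good, then X is basically disconnected, i.e., the closure of every cozero set is open. -/
/-- If `X` has a π-base of clopen sets and `C(X)` is rr-good, then `X` is
basically disconnected: the closure of every cozero set is clopen. -/
theorem basicallyDisconnected_of_rrGood {X : Type*} [TopologicalSpace X]
    (hpi : ∀ U : Set X, IsOpen U → U.Nonempty →
      ∃ V : Set X, IsClopen V ∧ V.Nonempty ∧ V ⊆ U)
    (hgood : IsRRGood C(X, ℝ)) :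
    ∀ f : C(X, ℝ), IsClopen (closure {x : X | f x ≠ 0}) := by
  classical
  intro f
  obtain ⟨h, h1, h2, hmax⟩ := hgood 1 (1 + f * f)
  have hpt : ∀ x, h x * h x = h x := by
    intro x
    have := ContinuousMap.congr_fun h1 x
    simpa using this
  have hf0 : ∀ x, h x * (f x * f x) = 0 := by
    intro x
    have e2 := ContinuousMap.congr_fun h2 x
    have e1 := ContinuousMap.congr_fun h1 x
    simp only [ContinuousMap.mul_apply, ContinuousMap.add_apply,
      ContinuousMap.one_apply] at e1 e2
    nlinarith [e1, e2]
  have hval : ∀ x, h x = 0 ∨ h x = 1 := by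
    intro x
    have hx := hpt x
    have : h x * (h x - 1) = 0 := by ring_nf; nlinarith
    rcases mul_eq_zero.mp this with h0 | h0
    · exact Or.inl h0
    · exact Or.inr (by linarith)
  set W : Set X := {x | h x = 1} with hWdef
  have hWclosed : IsClosed W := by
    have : W = h ⁻¹' {1} := rfl
    rw [this]
    exact isClosed_singleton.preimage h.continuous
  have hWopen : IsOpen W := by
    have : W = h ⁻¹' (Set.Ioi (1/2 : ℝ)) := by
      ext x
      rcases hval x with h0 | h0 <;>
        simp [hWdef, h0, Set.mem_Ioi] <;> norm_num
    rw [this]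
    exact isOpen_Ioi.preimage h.continuous
  have hWclopen : IsClopen W := ⟨hWclosed, hWopen⟩
  -- coz f ⊆ Wᶜ
  have hcoz : {x : X | f x ≠ 0} ⊆ Wᶜ := by
    intro x hx hxW
    have hx1 : h x = 1 := hxW
    have h0 := hf0 x
    rw [hx1, one_mul] at h0
    exact hx (by nlinarith)
  have hsub : closure {x : X | f x ≠ 0} ⊆ Wᶜ :=
    closure_minimal hcoz (hWopen.isClosed_compl)
  have hsup : Wᶜ ⊆ closure {x : X | f x ≠ 0} := by
    intro x hx
    by_contra hxc
    have hUopen : IsOpen ((closure {x : X | f x ≠ 0})ᶜ ∩ Wᶜ) :=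
      (isClosed_closure.isOpen_compl).inter hWclosed.isOpen_compl
    have hUne : ((closure {x : X | f x ≠ 0})ᶜ ∩ Wᶜ).Nonempty := ⟨x, hxc, hx⟩
    obtain ⟨V, hVclopen, ⟨v, hv⟩, hVsub⟩ := hpi _ hUopen hUne
    -- V is disjoint from coz f
    have hVf : ∀ y ∈ V, f y = 0 := by
      intro y hy
      by_contra hfy
      exact (hVsub hy).1 (subset_closure hfy)
    -- build the indicator continuous map
    set k : C(X, ℝ) := ⟨fun y => if y ∈ V then 1 else 0, by
      apply Continuous.if _ continuous_const continuous_const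
      intro a ha
      have ha' : a ∈ frontier V := ha
      rw [hVclopen.frontier_eq] at ha'
      exact ha'.elim⟩ with hkdef
    have hk1 : k * k = k * 1 := by
      ext y
      by_cases hy : y ∈ V <;> simp [hkdef, hy]
    have hk2 : k * k = k * (1 + f * f) := by
      ext y
      by_cases hy : y ∈ V
      · simp [hkdef, hy, hVf y hy]
      · simp [hkdef, hy]
    have hkh := hmax k hk1 hk2
    have := ContinuousMap.congr_fun hkh v
    simp only [ContinuousMap.mul_apply, hkdef, ContinuousMap.coe_mk, hv,
      if_true] at this
    have hvW : v ∈ W := by simpa [hWdef] using this.symm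
    exact (hVsub hv).2 hvW
  have hcl : closure {x : X | f x ≠ 0} = Wᶜ := Set.Subset.antisymm hsub hsup
  rw [hcl]
  exact hWclopen.compl
end

section
/- For a Tychonoff space X, C(X) is a weakly Baer ring if and only if whenever U is a cozero set and V is an open set with U ∩ V = ∅, there is a clopen set D with U ⊆ X∖D and V's cozero subsets contained in D; equivalently, X is basically disconnected. -/
open Set
open scoped Classical

private lemma indicator_cont {X : Type*} [TopologicalSpace X] {C : Set X} (hC : IsClopen C) :
    Continuous (fun x => if x ∈ C then (0:ℝ) else 1) := by
  have : IsLocallyConstant (fun x => if x ∈ C then (0:ℝ) else 1) := by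
    intro s
    by_cases h0 : (0:ℝ) ∈ s <;> by_cases h1 : (1:ℝ) ∈ s
    · convert isOpen_univ
      ext x; by_cases hx : x ∈ C <;> simp [hx, h0, h1]
    · convert hC.2
      ext x; by_cases hx : x ∈ C <;> simp [hx, h0, h1]
    · convert hC.compl.2
      ext x; by_cases hx : x ∈ C <;> simp [hx, h0, h1]
    · convert isOpen_empty
      ext x; by_cases hx : x ∈ C <;> simp [hx, h0, h1]
  exact this.continuous

private lemma wB_of_bd {X : Type*} [TopologicalSpace X] [CompletelyRegularSpace X]
    (h : ∀ f : C(X, ℝ), IsClopen (closure {x : X | f x ≠ 0})) :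
    ∀ f : C(X, ℝ), ∃ e : C(X, ℝ), e * e = e ∧
      ∀ g : C(X, ℝ), f * g = 0 ↔ ∃ r : C(X, ℝ), g = e * r := by
  intro f
  set C := closure {x : X | f x ≠ 0} with hCdef
  have hC := h f
  refine ⟨⟨fun x => if x ∈ C then 0 else 1, indicator_cont hC⟩, ?_, ?_⟩
  · ext x; by_cases hx : x ∈ C <;> simp [hx]
  · intro g
    constructor
    · intro hfg
      refine ⟨g, ?_⟩
      ext x
      by_cases hx : x ∈ C
      · have hg0 : g x = 0 := by
          have hsub : C ⊆ {y | g y = 0} := by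
            apply closure_minimal _ (isClosed_eq (map_continuous g) continuous_const)
            intro y hy
            have := ContinuousMap.congr_fun hfg y
            simp only [ContinuousMap.mul_apply, ContinuousMap.zero_apply] at this
            exact (mul_eq_zero.mp this).resolve_left hy
          exact hsub hx
        simp [hx, hg0]
      · simp [hx]
    · rintro ⟨r, rfl⟩
      ext x
      by_cases hx : x ∈ C
      · simp [hx]
      · have hfx : f x = 0 := by
          by_contra hfx
          exact hx (subset_closure hfx)
        simp [hfx]

private lemma bd_of_wB {X : Type*} [TopologicalSpace X] [CompletelyRegularSpace X]
    (h : ∀ f : C(X, ℝ), ∃ e : C(X, ℝ), e * e = e ∧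
      ∀ g : C(X, ℝ), f * g = 0 ↔ ∃ r : C(X, ℝ), g = e * r) :
    ∀ f : C(X, ℝ), IsClopen (closure {x : X | f x ≠ 0}) := by
  intro f
  obtain ⟨e, he, hAnn⟩ := h f
  have hfe : f * e = 0 := (hAnn e).mpr ⟨e, he.symm⟩
  have hdich : ∀ x, e x = 0 ∨ e x = 1 := by
    intro x
    have := ContinuousMap.congr_fun he x
    simp only [ContinuousMap.mul_apply] at this
    have h2 : e x * (e x - 1) = 0 := by linear_combination this
    rcases mul_eq_zero.mp h2 with h' | h'
    · exact Or.inl h'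
    · exact Or.inr (by linarith)
  have key : closure {x : X | f x ≠ 0} = {x | e x = 0} := by
    apply Subset.antisymm
    · apply closure_minimal _ (isClosed_eq (map_continuous e) continuous_const)
      intro x hx
      have := ContinuousMap.congr_fun hfe x
      simp only [ContinuousMap.mul_apply, ContinuousMap.zero_apply] at this
      exact (mul_eq_zero.mp this).resolve_left hx
    · intro x hx
      by_contra hxc
      obtain ⟨g, cg, hgx, hgK⟩ := CompletelyRegularSpace.completely_regular x
        (closure {x : X | f x ≠ 0}) isClosed_closure hxc
      set hfun : C(X, ℝ) := ⟨fun y => 1 - (g y : ℝ),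
        continuous_const.sub (continuous_subtype_val.comp cg)⟩ with hfdef
      have hfh : f * hfun = 0 := by
        ext y
        by_cases hy : f y = 0
        · simp [hfdef, hy]
        · have : g y = 1 := hgK (subset_closure hy)
          simp [hfdef, this]
      obtain ⟨r, hr⟩ := (hAnn hfun).mp hfh
      have := ContinuousMap.congr_fun hr x
      simp only [hfdef, ContinuousMap.mul_apply, ContinuousMap.coe_mk] at this
      rw [hgx] at this
      simp only [Icc.coe_zero, sub_zero] at this
      rw [hx, zero_mul] at this
      exact one_ne_zero this
  rw [key]
  constructor
  · exact isClosed_eq (map_continuous e) continuous_const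
  · have : {x | e x = 0} = e ⁻¹' (Iio (1/2)) := by
      ext x
      rcases hdich x with h' | h' <;> simp [h', Set.mem_Iio] <;> norm_num
    rw [this]
    exact (map_continuous e).isOpen_preimage _ isOpen_Iio

/-- For a Tychonoff space `X`, the following are equivalent:
`C(X)` is weakly Baer; every cozero set can be separated by a clopen set from any
disjoint open set; `X` is basically disconnected. -/
theorem weaklyBaer_iff_separation_iff_basicallyDisconnected {X : Type*}
    [TopologicalSpace X] [CompletelyRegularSpace X] [T1Space X] :
    ((∀ f : C(X, ℝ), ∃ e : C(X, ℝ), e * e = e ∧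
        ∀ g : C(X, ℝ), f * g = 0 ↔ ∃ r : C(X, ℝ), g = e * r) ↔
      (∀ (f : C(X, ℝ)) (V : Set X), IsOpen V → {x : X | f x ≠ 0} ∩ V = ∅ →
        ∃ D : Set X, IsClopen D ∧ {x : X | f x ≠ 0} ⊆ Dᶜ ∧ V ⊆ D)) ∧
    ((∀ (f : C(X, ℝ)) (V : Set X), IsOpen V → {x : X | f x ≠ 0} ∩ V = ∅ →
        ∃ D : Set X, IsClopen D ∧ {x : X | f x ≠ 0} ⊆ Dᶜ ∧ V ⊆ D) ↔
      (∀ f : C(X, ℝ), IsClopen (closure {x : X | f x ≠ 0}))) := by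
  have h23 : (∀ (f : C(X, ℝ)) (V : Set X), IsOpen V → {x : X | f x ≠ 0} ∩ V = ∅ →
        ∃ D : Set X, IsClopen D ∧ {x : X | f x ≠ 0} ⊆ Dᶜ ∧ V ⊆ D) ↔
      (∀ f : C(X, ℝ), IsClopen (closure {x : X | f x ≠ 0})) := by
    constructor
    · intro h2 f
      have hdisj : {x : X | f x ≠ 0} ∩ (closure {x : X | f x ≠ 0})ᶜ = ∅ := by
        rw [Set.eq_empty_iff_forall_notMem]
        rintro x ⟨hx1, hx2⟩
        exact hx2 (subset_closure hx1)
      obtain ⟨D, hD, hsub, hVsub⟩ := h2 f _ isClosed_closure.isOpen_compl hdisj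
      have h1 : closure {x : X | f x ≠ 0} ⊆ Dᶜ :=
        closure_minimal hsub hD.2.isClosed_compl
      have h2' : Dᶜ ⊆ closure {x : X | f x ≠ 0} := by
        intro x hx
        by_contra hxc
        exact hx (hVsub hxc)
      have : closure {x : X | f x ≠ 0} = Dᶜ := Subset.antisymm h1 h2'
      rw [this]
      exact hD.compl
    · intro h3 f V hV hdisj
      refine ⟨(closure {x : X | f x ≠ 0})ᶜ, (h3 f).compl, ?_, ?_⟩
      · simp only [compl_compl]
        exact subset_closure
      · intro x hxV hxc
        have : V ∩ {y : X | f y ≠ 0} ≠ ∅ := by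
          have := mem_closure_iff.mp hxc V hV hxV
          rwa [Set.nonempty_iff_ne_empty] at this
        rw [Set.inter_comm] at this
        exact this hdisj
  exact ⟨(Iff.intro (fun h => h23.mpr (bd_of_wB h)) (fun h => wB_of_bd (h23.mp h))), h23⟩
end

section
/- If X is a U-space (for every f ∈ C(X) there is a unit u with f = |f|·u), then C(X) is almost weakly Baer: for all f, g ∈ C(X) with fg = 0, there is an idempotent e with fe = 0 and ge = g. -/
/-- If `X` is a U-space then `C(X)` is almost weakly Baer: whenever `f * g = 0`
there is an idempotent `e` with `f * e = 0` and `g * e = g`. -/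
theorem almostWeaklyBaer_of_USpace {X : Type*} [TopologicalSpace X]
    [CompletelyRegularSpace X] [T1Space X]
    (hU : ∀ f : C(X, ℝ), ∃ u : C(X, ℝ), IsUnit u ∧ f = |f| * u) :
    ∀ f g : C(X, ℝ), f * g = 0 →
      ∃ e : C(X, ℝ), e * e = e ∧ f * e = 0 ∧ g * e = g := by
  intro f g hfg
  obtain ⟨u, hu, hh⟩ := hU (|f| - |g|)
  obtain ⟨v, hv⟩ := hu.exists_right_inv
  have hne : ∀ x, u x ≠ 0 := by
    intro x hx
    have h1 : u x * v x = 1 := by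
      have := congrArg (fun w : C(X, ℝ) => w x) hv
      simpa using this
    rw [hx, zero_mul] at h1
    exact zero_ne_one h1
  have hcont : Continuous fun x => (1 - u x / |u x|) / 2 := by
    apply Continuous.div_const
    apply Continuous.sub continuous_const
    exact u.continuous.div (continuous_abs.comp u.continuous)
      (fun x => abs_ne_zero.mpr (hne x))
  set e : C(X, ℝ) := ⟨fun x => (1 - u x / |u x|) / 2, hcont⟩ with he
  -- pointwise value of u/|u| is ±1
  have hsign : ∀ x, u x / |u x| = 1 ∨ u x / |u x| = -1 := by
    intro x
    rcases (hne x).lt_or_gt with h | h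
    · right
      rw [abs_of_neg h, div_neg, div_self (hne x)]
    · left
      rw [abs_of_pos h]
      exact div_self (ne_of_gt h)
  have hh' : ∀ x, |f x| - |g x| = |(|f x| - |g x|)| * u x := by
    intro x
    have := congrArg (fun w : C(X, ℝ) => w x) hh
    simpa using this
  refine ⟨e, ?_, ?_, ?_⟩
  · ext x
    simp only [ContinuousMap.mul_apply, he, ContinuousMap.coe_mk]
    rcases hsign x with h | h <;> rw [h] <;> ring
  · ext x
    simp only [ContinuousMap.mul_apply, he, ContinuousMap.coe_mk,
      ContinuousMap.zero_apply]
    by_cases hfx : f x = 0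
    · rw [hfx, zero_mul]
    · have hgx : g x = 0 := by
        have := congrArg (fun w : C(X, ℝ) => w x) hfg
        simp only [ContinuousMap.mul_apply, ContinuousMap.zero_apply] at this
        exact (mul_eq_zero.mp this).resolve_left hfx
      have h1 := hh' x
      rw [hgx] at h1
      simp only [abs_zero, sub_zero, abs_abs] at h1
      have hu1 : u x = 1 := by
        have := mul_left_cancel₀ (abs_ne_zero.mpr hfx)
          (show |f x| * 1 = |f x| * u x by rw [mul_one]; exact h1)
        exact this.symm
      rw [hu1]
      norm_num
  · ext x
    simp only [ContinuousMap.mul_apply, he, ContinuousMap.coe_mk]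
    by_cases hgx : g x = 0
    · rw [hgx, zero_mul]
    · have hfx : f x = 0 := by
        have := congrArg (fun w : C(X, ℝ) => w x) hfg
        simp only [ContinuousMap.mul_apply, ContinuousMap.zero_apply] at this
        exact (mul_eq_zero.mp this).resolve_right hgx
      have h1 := hh' x
      rw [hfx] at h1
      simp only [abs_zero, zero_sub, abs_neg, abs_abs] at h1
      have hu1 : u x = -1 := by
        have := mul_left_cancel₀ (abs_ne_zero.mpr hgx)
          (show |g x| * (-1) = |g x| * u x by rw [mul_neg_one]; linarith [h1])
        exact this.symm
      rw [hu1]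
      norm_num
end

section
/- If any two disjoint cozero sets of a Tychonoff space X can be separated by a clopen set, then X is a U-space: for every f ∈ C(X) there is a unit u ∈ C(X) with f = |f|·u. -/
/-!
A clopen set `D` separating the cozero sets of `f⁺` and `f⁻` contains `{f > 0}` and misses
`{f < 0}`. The function `u` equal to `1` on `D` and `-1` off `D` is continuous because `D` is
clopen, it is its own inverse, and `f = |f| * u` pointwise.
-/

open Set

namespace ContinuousMap

variable {X R : Type*} [TopologicalSpace X] [TopologicalSpace R]

section ClopenSign

variable (R) [Ring R] {D : Set X}

open Classical in
noncomputable def clopenSign (hD : IsClopen D) : C(X, R) where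
  toFun := D.piecewise (fun _ => 1) (fun _ => -1)
  continuous_toFun :=
    continuous_piecewise (by simp [hD.frontier_eq]) continuousOn_const continuousOn_const

variable {R}

@[simp]
theorem clopenSign_apply_of_mem (hD : IsClopen D) {x : X} (hx : x ∈ D) :
    clopenSign R hD x = 1 := by
  simp [clopenSign, hx]

@[simp]
theorem clopenSign_apply_of_notMem (hD : IsClopen D) {x : X} (hx : x ∉ D) :
    clopenSign R hD x = -1 := by
  simp [clopenSign, hx]

theorem clopenSign_mul_self [IsTopologicalRing R] (hD : IsClopen D) :
    clopenSign R hD * clopenSign R hD = 1 := by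
  ext x
  by_cases hx : x ∈ D <;> simp [hx]

theorem isUnit_clopenSign [IsTopologicalRing R] (hD : IsClopen D) : IsUnit (clopenSign R hD) :=
  ⟨⟨_, _, clopenSign_mul_self hD, clopenSign_mul_self hD⟩, rfl⟩

end ClopenSign

section PosNegPart

variable [AddCommGroup R] [LinearOrder R] [IsOrderedAddMonoid R] [OrderTopology R]

theorem setOf_posPart_ne_zero (f : C(X, R)) : {x | f⁺ x ≠ 0} = {x | 0 < f x} := by
  ext x
  simp [posPart_def]

theorem setOf_negPart_ne_zero (f : C(X, R)) : {x | f⁻ x ≠ 0} = {x | f x < 0} := by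
  ext x
  simp [negPart_def]

theorem setOf_posPart_ne_zero_inter_setOf_negPart_ne_zero (f : C(X, R)) :
    {x | f⁺ x ≠ 0} ∩ {x | f⁻ x ≠ 0} = ∅ := by
  rw [setOf_posPart_ne_zero, setOf_negPart_ne_zero, eq_empty_iff_forall_notMem]
  exact fun x hx => lt_asymm hx.1 hx.2

end PosNegPart

theorem eq_abs_mul_clopenSign [Ring R] [LinearOrder R] [IsOrderedRing R] [OrderTopology R]
    [IsTopologicalRing R] {f : C(X, R)} {D : Set X} (hD : IsClopen D)
    (hpos : {x | 0 < f x} ⊆ D) (hneg : {x | f x < 0} ⊆ Dᶜ) :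
    f = |f| * clopenSign R hD := by
  ext x
  by_cases hx : x ∈ D
  · have : 0 ≤ f x := not_lt.1 fun h => hneg h hx
    simp [hx, abs_of_nonneg this]
  · have : f x ≤ 0 := not_lt.1 fun h => hx (hpos h)
    simp [hx, abs_of_nonpos this]

end ContinuousMap

theorem uSpace_of_clopen_separation_general {X : Type*} [TopologicalSpace X]
    (hsep : ∀ f g : C(X, ℝ), {x : X | f x ≠ 0} ∩ {x : X | g x ≠ 0} = ∅ →
      ∃ D : Set X, IsClopen D ∧ {x : X | f x ≠ 0} ⊆ D ∧ {x : X | g x ≠ 0} ⊆ Dᶜ) :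
    ∀ f : C(X, ℝ), ∃ u : C(X, ℝ), IsUnit u ∧ f = |f| * u := by
  intro f
  obtain ⟨D, hD, hpos, hneg⟩ :=
    hsep f⁺ f⁻ (ContinuousMap.setOf_posPart_ne_zero_inter_setOf_negPart_ne_zero f)
  rw [ContinuousMap.setOf_posPart_ne_zero] at hpos
  rw [ContinuousMap.setOf_negPart_ne_zero] at hneg
  exact ⟨_, ContinuousMap.isUnit_clopenSign hD,
    ContinuousMap.eq_abs_mul_clopenSign hD hpos hneg⟩

/-- If any two disjoint cozero sets of `X` can be separated by a clopen set, then
`X` is a U-space: every `f ∈ C(X)` is `|f|` times a unit. -/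
theorem uSpace_of_clopen_separation {X : Type*} [TopologicalSpace X]
    [CompletelyRegularSpace X] [T1Space X]
    (hsep : ∀ f g : C(X, ℝ), {x : X | f x ≠ 0} ∩ {x : X | g x ≠ 0} = ∅ →
      ∃ D : Set X, IsClopen D ∧ {x : X | f x ≠ 0} ⊆ D ∧ {x : X | g x ≠ 0} ⊆ Dᶜ) :
    ∀ f : C(X, ℝ), ∃ u : C(X, ℝ), IsUnit u ∧ f = |f| * u :=
  uSpace_of_clopen_separation_general hsep
end

section
/- In C(X) for a Tychonoff space X possessing a clopen π-base, if disjoint cozero sets can always be separated by clopen sets and additionally every cozero set can be separated from any disjoint open set by a clopen set, then X is basically disconnected. -/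
/-- If `X` is Tychonoff with a clopen π-base, and disjoint cozero sets can be
separated by clopen sets, and moreover every cozero set can be separated by a clopen
set from any disjoint open set, then `X` is basically disconnected. -/
theorem basicallyDisconnected_of_separations {X : Type*} [TopologicalSpace X]
    [CompletelyRegularSpace X] [T1Space X]
    (hpi : ∀ U : Set X, IsOpen U → U.Nonempty →
      ∃ V : Set X, IsClopen V ∧ V.Nonempty ∧ V ⊆ U)
    (hsepcoz : ∀ f g : C(X, ℝ), {x : X | f x ≠ 0} ∩ {x : X | g x ≠ 0} = ∅ →
      ∃ D : Set X, IsClopen D ∧ {x : X | f x ≠ 0} ⊆ D ∧ {x : X | g x ≠ 0} ⊆ Dᶜ)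
    (hsepopen : ∀ (f : C(X, ℝ)) (V : Set X), IsOpen V → {x : X | f x ≠ 0} ∩ V = ∅ →
      ∃ D : Set X, IsClopen D ∧ {x : X | f x ≠ 0} ⊆ D ∧ V ⊆ Dᶜ) :
    ∀ f : C(X, ℝ), IsClopen (closure {x : X | f x ≠ 0}) := by
  intro f
  set U : Set X := {x : X | f x ≠ 0}
  obtain ⟨D, hD, hUD, hVD⟩ := hsepopen f (closure U)ᶜ isClosed_closure.isOpen_compl
    (by
      apply Set.eq_empty_of_subset_empty
      rintro x ⟨hx, hxc⟩
      exact hxc (subset_closure hx))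
  have hDU : closure U = D := by
    apply Set.Subset.antisymm
    · exact closure_minimal hUD hD.isClosed
    · intro x hx
      by_contra hxc
      exact hVD hxc hx
  rw [hDU]; exact hD
end

section
/- In an almost weakly Baer reduced commutative ring R, R is rr-good if and only if R is weakly Baer. -/
/-- An almost weakly Baer reduced commutative ring is rr-good iff it is weakly Baer. -/
theorem isRRGood_iff_weaklyBaer_of_awB {R : Type*} [CommRing R] [IsReduced R]
    (hawB : ∀ r s : R, r * s = 0 →
      s ∈ Ideal.span {e : R | e * e = e ∧ r * e = 0}) :
    IsRRGood R ↔
      ∀ r : R, ∃ e : R, e * e = e ∧ ∀ s : R, r * s = 0 ↔ ∃ t : R, s = e * t := by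
  constructor
  · intro hgood r
    obtain ⟨h, h1, h2, h3⟩ := hgood 1 (1 + r)
    have hid : h * h = h := by linear_combination h1
    have hhr : h * r = 0 := by linear_combination h1 - h2
    refine ⟨h, hid, fun s => ⟨fun hs => ?_, fun ⟨t, ht⟩ => by
      subst ht; linear_combination t * hhr⟩⟩
    have hmem := hawB r s hs
    have hle : Ideal.span {e : R | e * e = e ∧ r * e = 0} ≤ Ideal.span {h} := by
      rw [Ideal.span_le]
      rintro k ⟨hk1, hkr⟩
      have hk2 : k * k = k * (1 + r) := by linear_combination hk1 - hkr
      have hk3 : k * k = k * h := h3 k (by linear_combination hk1) hk2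
      exact Ideal.mem_span_singleton'.mpr ⟨k, by linear_combination hk1 - hk3⟩
    obtain ⟨c, hc⟩ := Ideal.mem_span_singleton'.mp (hle hmem)
    exact ⟨c, by linear_combination -hc⟩
  · intro hwB r s
    obtain ⟨e, he, hiff⟩ := hwB (r - s)
    have hde : (r - s) * e = 0 := (hiff e).mpr ⟨1, (mul_one e).symm⟩
    refine ⟨e * r, by linear_combination (r * r) * he,
      by linear_combination (r * r) * he + r * hde, fun k hkr hks => ?_⟩
    have hk : (r - s) * k = 0 := by linear_combination hks - hkr
    obtain ⟨t, ht⟩ := (hiff k).mp hk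
    have hke : k * e = k := by rw [ht]; linear_combination t * he
    calc k * k = k * r := hkr
      _ = k * (e * r) := by rw [← mul_assoc, hke]
end

section
/- Suppose a space X contains a sequence {D_n} of pairwise disjoint nonempty clopen sets whose union U is not closed, and there is a point x in the boundary of U each of whose neighbourhoods meets all but finitely many D_n. Then C(X) is not rr-good; in particular, the one-point compactification of ℕ is not rr-good. -/
open Set Filter Topology

theorem IsRRGood.exists_mul_eq_zero_and_mul_eq_self {R : Type*} [Ring R] (hR : IsRRGood R)
    (t : R) :
    ∃ h : R, h * t = 0 ∧ ∀ k : R, IsIdempotentElem k → k * t = 0 → k * h = k := by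
  obtain ⟨h, h_one, h_one_add, h_max⟩ := hR 1 (1 + t)
  refine ⟨h, ?_, fun k hk hkt => ?_⟩
  · rwa [mul_add, ← h_one, left_eq_add] at h_one_add
  · have hk_one : k * k = k * 1 := by rw [hk.eq, mul_one]
    exact (h_max k hk_one (by rw [mul_add, hkt, add_zero, hk_one])).symm.trans hk.eq

theorem IsRRGood.exists_continuousMap_eq_zero_and_eq_one {X : Type*} [TopologicalSpace X]
    (hX : IsRRGood C(X, ℝ)) (t : C(X, ℝ)) :
    ∃ h : C(X, ℝ), (∀ y, t y ≠ 0 → h y = 0) ∧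
      ∀ s : Set X, IsClopen s → (∀ y ∈ s, t y = 0) → ∀ y ∈ s, h y = 1 := by
  obtain ⟨h, hht, h_max⟩ := hX.exists_mul_eq_zero_and_mul_eq_self t
  refine ⟨h, fun y hy => ?_, fun s hs hts y hy => ?_⟩
  · simpa [hy] using congr($hht y)
  · let k : C(X, ℝ) := (BoundedContinuousFunction.indicator s hs).toContinuousMap
    have hk : IsIdempotentElem k := by
      ext z
      by_cases hz : z ∈ s <;> simp [k, hz]
    have hkt : k * t = 0 := by
      ext z
      by_cases hz : z ∈ s <;> simp [k, hz, hts]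
    simpa [k, hy] using congr($(h_max k hk hkt) y)

section SumIndicatorConst

variable {X : Type*} {E : ℕ → Set X} {c : ℕ → ℝ}

noncomputable def sumIndicatorConst (E : ℕ → Set X) (c : ℕ → ℝ) (y : X) : ℝ :=
  ∑' n, (E n).indicator (fun _ => c n) y

theorem sumIndicatorConst_of_mem (hE : Pairwise fun m n => Disjoint (E m) (E n)) {y : X} {n : ℕ}
    (hy : y ∈ E n) : sumIndicatorConst E c y = c n := by
  rw [sumIndicatorConst, tsum_eq_single n fun m hm =>
    indicator_of_notMem (disjoint_right.1 (hE hm) hy) _, indicator_of_mem hy]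

theorem sumIndicatorConst_of_forall_notMem {y : X} (hy : ∀ n, y ∉ E n) :
    sumIndicatorConst E c y = 0 := by
  simp [sumIndicatorConst, hy]

theorem continuous_sumIndicatorConst [TopologicalSpace X] (hE : ∀ n, IsClopen (E n))
    (hdisj : Pairwise fun m n => Disjoint (E m) (E n)) (hc : Tendsto c atTop (𝓝 0)) :
    Continuous (sumIndicatorConst E c) := by
  refine continuous_iff_continuousAt.2 fun y => ?_
  by_cases hy : ∃ n, y ∈ E n
  · obtain ⟨n, hn⟩ := hy
    refine (continuousAt_const : ContinuousAt (fun _ => c n) y).congr ?_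
    filter_upwards [(hE n).isOpen.mem_nhds hn] with z hz
    exact (sumIndicatorConst_of_mem hdisj hz).symm
  · push Not at hy
    rw [ContinuousAt, sumIndicatorConst_of_forall_notMem hy, Metric.tendsto_nhds]
    intro ε hε
    obtain ⟨K, hK⟩ := Metric.tendsto_atTop.1 hc ε hε
    have h_far : ∀ᶠ z in 𝓝 y, ∀ n ∈ Finset.range K, z ∉ E n :=
      (Finset.eventually_all _).2 fun n _ => (hE n).isClosed.isOpen_compl.mem_nhds (hy n)
    filter_upwards [h_far] with z hz
    by_cases hz' : ∃ n, z ∈ E n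
    · obtain ⟨n, hn⟩ := hz'
      rw [sumIndicatorConst_of_mem hdisj hn]
      exact hK n (not_lt.1 fun hnK => hz n (Finset.mem_range.2 hnK) hn)
    · push Not at hz'
      rwa [sumIndicatorConst_of_forall_notMem hz', dist_self]

end SumIndicatorConst

theorem mem_closure_iUnion_comp_of_finite {X : Type*} [TopologicalSpace X] {D : ℕ → Set X}
    {x : X} (hx : ∀ N ∈ 𝓝 x, {n : ℕ | N ∩ D n = ∅}.Finite) {φ : ℕ → ℕ}
    (hφ : φ.Injective) : x ∈ closure (⋃ m, D (φ m)) := by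
  refine mem_closure_iff_nhds.2 fun N hN => ?_
  obtain ⟨m, hm⟩ := ((hx N hN).preimage hφ.injOn).infinite_compl.nonempty
  obtain ⟨y, hyN, hyD⟩ := nonempty_iff_ne_empty.2 hm
  exact ⟨y, hyN, mem_iUnion.2 ⟨m, hyD⟩⟩

theorem not_isRRGood_continuousMap_of_clopen_sequence {X : Type*} [TopologicalSpace X]
    {D : ℕ → Set X} (hD : ∀ n, IsClopen (D n)) (hdisj : Pairwise fun m n => Disjoint (D m) (D n))
    {x : X} (hx : ∀ N ∈ 𝓝 x, {n : ℕ | N ∩ D n = ∅}.Finite) : ¬ IsRRGood C(X, ℝ) := by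
  intro hX
  have h_odd_inj : (fun m : ℕ => 2 * m + 1).Injective := fun a b hab => by simpa using hab
  have h_even_inj : (fun m : ℕ => 2 * m).Injective := fun a b hab => by simpa using hab
  let t : C(X, ℝ) := ⟨sumIndicatorConst (fun m => D (2 * m + 1)) fun m => 1 / (m + 1),
    continuous_sumIndicatorConst (fun m => hD _) (hdisj.comp_of_injective h_odd_inj)
      tendsto_one_div_add_atTop_nhds_zero_nat⟩
  obtain ⟨h, h_zero, h_one⟩ := hX.exists_continuousMap_eq_zero_and_eq_one t
  have h_zero_odd : EqOn h 0 (⋃ m, D (2 * m + 1)) := by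
    simp only [EqOn, mem_iUnion, forall_exists_index]
    intro y m hy
    refine h_zero y ?_
    rw [ContinuousMap.coe_mk, sumIndicatorConst_of_mem (hdisj.comp_of_injective h_odd_inj) hy]
    positivity
  have h_one_even : EqOn h 1 (⋃ m, D (2 * m)) := by
    simp only [EqOn, mem_iUnion, forall_exists_index]
    exact fun y m => h_one _ (hD (2 * m)) (fun z hz => sumIndicatorConst_of_forall_notMem
      fun k hk => disjoint_left.1 (hdisj (by omega)) hz hk) y
  have hx_zero := h_zero_odd.closure h.continuous continuous_const
    (mem_closure_iUnion_comp_of_finite hx h_odd_inj)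
  have hx_one := h_one_even.closure h.continuous continuous_const
    (mem_closure_iUnion_comp_of_finite hx h_even_inj)
  exact zero_ne_one (hx_zero.symm.trans hx_one)

theorem OnePoint.isClopen_singleton_coe {X : Type*} [TopologicalSpace X] [DiscreteTopology X]
    (n : X) : IsClopen {(n : OnePoint X)} :=
  ⟨isClosed_singleton, by
    simpa using OnePoint.isOpenEmbedding_coe.isOpenMap {n} (isOpen_discrete _)⟩

theorem OnePoint.finite_setOf_notMem_of_mem_nhds_infty {X : Type*} [TopologicalSpace X]
    [DiscreteTopology X] {N : Set (OnePoint X)} (hN : N ∈ 𝓝 OnePoint.infty) :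
    {n : X | (n : OnePoint X) ∉ N}.Finite := by
  refine mem_cofinite.1 (?_ : ((↑) : X → OnePoint X) ⁻¹' N ∈ cofinite)
  rw [← cocompact_eq_cofinite, ← coclosedCompact_eq_cocompact, ← OnePoint.comap_coe_nhds_infty]
  exact preimage_mem_comap hN

/-- If `X` contains a sequence of pairwise disjoint nonempty clopen sets whose union
is not closed and there is a boundary point of the union each of whose neighbourhoods
meets all but finitely many of the sets, then `C(X)` is not rr-good; in particular the
one-point compactification of `ℕ` is not rr-good. -/
theorem not_rrGood_of_clopen_sequence :
    (∀ (X : Type) [TopologicalSpace X] (D : ℕ → Set X),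
      (∀ n, IsClopen (D n)) → (∀ n, (D n).Nonempty) →
      (Pairwise fun m n => Disjoint (D m) (D n)) →
      ¬ IsClosed (⋃ n, D n) →
      (∃ x ∈ frontier (⋃ n, D n),
        ∀ N ∈ nhds x, {n : ℕ | N ∩ D n = ∅}.Finite) →
      ¬ IsRRGood C(X, ℝ)) ∧
    ¬ IsRRGood C(OnePoint ℕ, ℝ) := by
  refine ⟨fun X _ D hD _ hdisj _ ⟨x, _, hx⟩ =>
    not_isRRGood_continuousMap_of_clopen_sequence hD hdisj hx, ?_⟩
  refine not_isRRGood_continuousMap_of_clopen_sequence (D := fun n : ℕ => {(n : OnePoint ℕ)})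
    OnePoint.isClopen_singleton_coe (fun m n hmn => ?_) (x := OnePoint.infty) fun N hN => ?_
  · exact disjoint_singleton.2 (OnePoint.coe_injective.ne hmn)
  · simpa [inter_singleton_eq_empty] using OnePoint.finite_setOf_notMem_of_mem_nhds_infty hN
end

section
/- The subspace B = ⋃{graph of y = mx+b : m, b ∈ ℚ, m ≠ 0} of ℝ² is locally connected; in fact, for every point of B and every open disk around it, the intersection of the disk with B is connected. -/
open Set Metric

private def Bset : Set (ℝ × ℝ) := {q : ℝ × ℝ | ∃ m b : ℚ, m ≠ 0 ∧ q.2 = (m : ℝ) * q.1 + (b : ℝ)}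

private lemma seg_on_line {m b : ℝ} {p q : ℝ × ℝ} (hp : p.2 = m * p.1 + b)
    (hq : q.2 = m * q.1 + b) {z : ℝ × ℝ} (hz : z ∈ segment ℝ p q) :
    z.2 = m * z.1 + b := by
  obtain ⟨a, c, ha, hc, hac, rfl⟩ := hz
  simp only [Prod.smul_fst, Prod.smul_snd, Prod.fst_add, Prod.snd_add, smul_eq_mul]
  rw [hp, hq]; linear_combination b * hac

private lemma rat_seg_sub_B {x1 y1 x2 y2 : ℚ} (hx : x1 ≠ x2) (hy : y1 ≠ y2) :
    segment ℝ ((x1 : ℝ), (y1 : ℝ)) ((x2 : ℝ), (y2 : ℝ)) ⊆ Bset := by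
  set m : ℚ := (y2 - y1) / (x2 - x1) with hm
  have hxne : (x2 - x1 : ℚ) ≠ 0 := sub_ne_zero.mpr hx.symm
  have hm0 : m ≠ 0 := div_ne_zero (sub_ne_zero.mpr hy.symm) hxne
  set b : ℚ := y1 - m * x1 with hb
  have key1 : y1 = m * x1 + b := by rw [hb]; ring
  have key2 : y2 = m * x2 + b := by
    rw [hb, hm]; field_simp; ring
  have h1 : (y1 : ℝ) = (m : ℝ) * (x1 : ℝ) + (b : ℝ) := by exact_mod_cast key1
  have h2 : (y2 : ℝ) = (m : ℝ) * (x2 : ℝ) + (b : ℝ) := by exact_mod_cast key2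
  intro z hz
  exact ⟨m, b, hm0, seg_on_line h1 h2 hz⟩

private lemma rat_point_near {m b : ℚ} {p : ℝ × ℝ} (hp : p.2 = (m : ℝ) * p.1 + (b : ℝ))
    {ε : ℝ} (hε : 0 < ε) :
    ∃ x y : ℚ, (y : ℝ) = (m : ℝ) * (x : ℝ) + (b : ℝ) ∧
      dist (((x : ℝ), (y : ℝ)) : ℝ × ℝ) p < ε := by
  have hden : (0 : ℝ) < 1 + |(m : ℝ)| := by positivity
  have hd : 0 < ε / (1 + |(m : ℝ)|) := div_pos hε hden
  obtain ⟨x, hx⟩ := exists_rat_near p.1 hd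
  have h1 : dist (x : ℝ) p.1 < ε / (1 + |(m : ℝ)|) := by rwa [Real.dist_eq, abs_sub_comm]
  refine ⟨x, m * x + b, by push_cast; ring, ?_⟩
  rw [Prod.dist_eq]
  have h1' : dist (x : ℝ) p.1 * (1 + |(m : ℝ)|) < ε := by
    rwa [← lt_div_iff₀ hden]
  have h2' : dist ((m : ℝ) * (x : ℝ) + (b : ℝ)) p.2 = |(m : ℝ)| * dist (x : ℝ) p.1 := by
    rw [hp, Real.dist_eq, Real.dist_eq, ← abs_mul]; congr 1; ring
  have hdn : (0 : ℝ) ≤ dist (x : ℝ) p.1 := dist_nonneg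
  apply max_lt
  · nlinarith [abs_nonneg ((m : ℝ))]
  · push_cast
    rw [h2']
    nlinarith [abs_nonneg ((m : ℝ))]

private lemma rat_avoid (a : ℝ) {δ : ℝ} (hδ : 0 < δ) (u v : ℚ) :
    ∃ x : ℚ, |(x : ℝ) - a| < δ ∧ x ≠ u ∧ x ≠ v := by
  obtain ⟨t1, ht1a, ht1b⟩ := exists_rat_btwn (show a < a + δ by linarith)
  obtain ⟨t2, ht2a, ht2b⟩ := exists_rat_btwn ht1a
  obtain ⟨t3, ht3a, ht3b⟩ := exists_rat_btwn ht2a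
  have habs : ∀ t : ℚ, a < (t : ℝ) → (t : ℝ) < a + δ → |(t : ℝ) - a| < δ := by
    intro t h1 h2
    rw [abs_sub_lt_iff]; constructor <;> linarith
  have h1d := habs t1 ht1a ht1b
  have h2d := habs t2 ht2a (ht2b.trans ht1b)
  have h3d := habs t3 ht3a (ht3b.trans (ht2b.trans ht1b))
  have ne21 : t2 ≠ t1 := by exact_mod_cast ne_of_lt ht2b
  have ne31 : t3 ≠ t1 := by exact_mod_cast ne_of_lt (ht3b.trans ht2b)
  have ne32 : t3 ≠ t2 := by exact_mod_cast ne_of_lt ht3b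
  rcases eq_or_ne t1 u with rfl | h1u
  · rcases eq_or_ne t2 v with rfl | h2v
    · exact ⟨t3, h3d, ne31, ne32⟩
    · exact ⟨t2, h2d, ne21, h2v⟩
  · rcases eq_or_ne t1 v with rfl | h1v
    · rcases eq_or_ne t2 u with rfl | h2u
      · exact ⟨t3, h3d, ne32, ne31⟩
      · exact ⟨t2, h2d, h2u, ne21⟩
    · exact ⟨t1, h1d, h1u, h1v⟩

private lemma ball_conn (p : ℝ × ℝ) (hp : p ∈ Bset) {r : ℝ} (hr : 0 < r) :
    IsConnected (Metric.ball p r ∩ Bset) := by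
  have hpmem : p ∈ Metric.ball p r ∩ Bset := ⟨mem_ball_self hr, hp⟩
  refine ⟨⟨p, hpmem⟩, isPreconnected_of_forall p ?_⟩
  obtain ⟨mp, bp, hmp, hlp⟩ := hp
  obtain ⟨px, py, hply, hpd⟩ := rat_point_near hlp hr
  set P' : ℝ × ℝ := ((px : ℝ), (py : ℝ)) with hP'
  have hP'ball : P' ∈ Metric.ball p r := by rwa [mem_ball]
  rintro q ⟨hqball, mq, bq, hmq, hlq⟩
  have hε : 0 < r - dist q p := by rw [mem_ball] at hqball; linarith
  obtain ⟨qx, qy, hqly, hqd⟩ := rat_point_near hlq hε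
  set Q' : ℝ × ℝ := ((qx : ℝ), (qy : ℝ)) with hQ'
  have hQ'ball : Q' ∈ Metric.ball p r := by
    rw [mem_ball]
    calc dist Q' p ≤ dist Q' q + dist q p := dist_triangle _ _ _
      _ < r := by linarith
  obtain ⟨x3, hx3d, hx3p, hx3q⟩ := rat_avoid p.1 hr px qx
  obtain ⟨y3, hy3d, hy3p, hy3q⟩ := rat_avoid p.2 hr py qy
  set C : ℝ × ℝ := ((x3 : ℝ), (y3 : ℝ)) with hC
  have hCball : C ∈ Metric.ball p r := by
    rw [mem_ball, Prod.dist_eq]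
    exact max_lt (by rw [Real.dist_eq]; exact hx3d) (by rw [Real.dist_eq]; exact hy3d)
  have hconv := convex_ball p r
  refine ⟨segment ℝ p P' ∪ segment ℝ P' C ∪ segment ℝ C Q' ∪ segment ℝ Q' q,
    ?_, ?_, ?_, ?_⟩
  · -- subset of ball ∩ Bset
    apply union_subset; apply union_subset; apply union_subset
    · intro z hz
      exact ⟨hconv.segment_subset (mem_ball_self hr) hP'ball hz,
        ⟨mp, bp, hmp, seg_on_line hlp hply hz⟩⟩
    · intro z hz
      refine ⟨hconv.segment_subset hP'ball hCball hz, ?_⟩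
      exact rat_seg_sub_B (Ne.symm hx3p) (Ne.symm hy3p) hz
    · intro z hz
      refine ⟨hconv.segment_subset hCball hQ'ball hz, ?_⟩
      exact rat_seg_sub_B hx3q hy3q hz
    · intro z hz
      exact ⟨hconv.segment_subset hQ'ball hqball hz,
        ⟨mq, bq, hmq, seg_on_line hqly hlq hz⟩⟩
  · exact Or.inl (Or.inl (Or.inl (left_mem_segment ℝ p P')))
  · exact Or.inr (right_mem_segment ℝ Q' q)
  · have c1 : IsPreconnected (segment ℝ p P') := (convex_segment _ _).isPreconnected
    have c2 : IsPreconnected (segment ℝ P' C) := (convex_segment _ _).isPreconnected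
    have c3 : IsPreconnected (segment ℝ C Q') := (convex_segment _ _).isPreconnected
    have c4 : IsPreconnected (segment ℝ Q' q) := (convex_segment _ _).isPreconnected
    have u12 : IsPreconnected (segment ℝ p P' ∪ segment ℝ P' C) :=
      c1.union P' (right_mem_segment ℝ p P') (left_mem_segment ℝ P' C) c2
    have u123 : IsPreconnected (segment ℝ p P' ∪ segment ℝ P' C ∪ segment ℝ C Q') :=
      u12.union C (Or.inr (right_mem_segment ℝ P' C)) (left_mem_segment ℝ C Q') c3
    exact u123.union Q' (Or.inr (right_mem_segment ℝ C Q')) (left_mem_segment ℝ Q' q) c4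

/-- The union `B` of all matched lines, as a subspace of `ℝ²`, is locally connected;
in fact the intersection of `B` with any open disk centred at a point of `B`
is connected. -/
theorem matched_lines_locallyConnected :
    LocallyConnectedSpace
      {p : ℝ × ℝ // ∃ m b : ℚ, m ≠ 0 ∧ p.2 = (m : ℝ) * p.1 + (b : ℝ)} ∧
    ∀ p : ℝ × ℝ, (∃ m b : ℚ, m ≠ 0 ∧ p.2 = (m : ℝ) * p.1 + (b : ℝ)) →
      ∀ r : ℝ, 0 < r →
        IsConnected (Metric.ball p r ∩
          {q : ℝ × ℝ | ∃ m b : ℚ, m ≠ 0 ∧ q.2 = (m : ℝ) * q.1 + (b : ℝ)}) := by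
  constructor
  · refine locallyConnectedSpace_of_connected_bases (fun x r => Metric.ball x r)
      (fun _ r => 0 < r) (fun x => Metric.nhds_basis_ball) ?_
    intro x r hr
    show IsPreconnected (Metric.ball x r)
    refine Topology.IsInducing.subtypeVal.isPreconnected_image.mp ?_
    have himg : (Subtype.val '' Metric.ball x r : Set (ℝ × ℝ))
        = Metric.ball (x : ℝ × ℝ) r ∩ Bset := by
      ext z
      constructor
      · rintro ⟨w, hw, rfl⟩
        rw [mem_ball, Subtype.dist_eq] at hw
        exact ⟨hw, w.2⟩
      · rintro ⟨hz, hzB⟩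
        exact ⟨⟨z, hzB⟩, by rwa [mem_ball, Subtype.dist_eq], rfl⟩
    show IsPreconnected (Subtype.val '' Metric.ball x r : Set (ℝ × ℝ))
    rw [himg]
    exact (ball_conn (x : ℝ × ℝ) x.2 hr).isPreconnected
  · exact fun p hp r hr => ball_conn p hp hr
end
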